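/- arXiv:1803.03774 — 12 statements merged into one kernel-verified Lean document; each statement's English description precedes it below -/
import Mathlib

section
/- Let (ω, c) ∈ ℝ² satisfy condition (WC). Then the function η₃ ↦ η₂(η₃) = (−η₃ + 4c + √(A(η₃)))/2 is strictly decreasing on the open interval (α₀, α₁), and 0 < η₂(η₃) < α₀ for every η₃ ∈ (α₀, α₁). -/
/-!
The quadratic `A(t) = 64ω − 3t² + 8ct` peaks at `t = 4c/3 ≤ α₀`, so on `[4c/3, ∞)` both `−t` and
`√(A t)` decrease and `η₂` is strictly decreasing. Since `A(α₀) = (3α₀ − 4c)²`, `α₀` is a fixed point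
of `η₂`, which gives `η₂ t < α₀` for `t > α₀`. Positivity amounts to `t − 4c < √(A t)`, and
`A t − (t − 4c)² = 4 (16ω − (t − 2c)²)` is positive exactly when `|t − 2c| < 4√ω`, which holds on
`(α₀, α₁)` because `2c ≤ α₀` and `α₁ = 2c + 4√ω`.
-/

open Real Set

def quadA (ω c t : ℝ) : ℝ := 64 * ω - 3 * t ^ 2 + 8 * c * t

noncomputable def eta₂ (ω c t : ℝ) : ℝ := (-t + 4 * c + √(quadA ω c t)) / 2

noncomputable def alpha₀ (ω c : ℝ) : ℝ := (4 * c + √(48 * ω + 4 * c ^ 2)) / 3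

section

variable (ω c : ℝ)

lemma quadA_antitoneOn : AntitoneOn (quadA ω c) (Ici (4 * c / 3)) := by
  intro s hs t _ hst
  simp only [mem_Ici] at hs
  unfold quadA
  nlinarith [mul_nonneg (sub_nonneg.2 hst) (by linarith : (0 : ℝ) ≤ 3 * s + 3 * t - 8 * c)]

lemma eta₂_strictAntiOn : StrictAntiOn (eta₂ ω c) (Ici (4 * c / 3)) := by
  intro s hs t ht hst
  have hsqrt : √(quadA ω c t) ≤ √(quadA ω c s) :=
    Real.sqrt_le_sqrt (quadA_antitoneOn ω c hs ht hst.le)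
  unfold eta₂
  linarith

lemma four_mul_div_three_le_alpha₀ : 4 * c / 3 ≤ alpha₀ ω c := by
  have := Real.sqrt_nonneg (48 * ω + 4 * c ^ 2)
  unfold alpha₀
  linarith

variable {ω}

lemma two_mul_le_alpha₀ (hω : 0 ≤ ω) : 2 * c ≤ alpha₀ ω c := by
  have h : 2 * c ≤ √(48 * ω + 4 * c ^ 2) :=
    Real.le_sqrt_of_sq_le (by nlinarith)
  unfold alpha₀
  linarith

lemma eta₂_alpha₀ (hω : 0 ≤ ω) : eta₂ ω c (alpha₀ ω c) = alpha₀ ω c := by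
  have hsq := Real.sq_sqrt (by positivity : 0 ≤ 48 * ω + 4 * c ^ 2)
  have hA : quadA ω c (alpha₀ ω c) = √(48 * ω + 4 * c ^ 2) ^ 2 := by
    unfold quadA alpha₀
    linear_combination (-(4 : ℝ) / 3) * hsq
  rw [eta₂, hA, Real.sqrt_sq (Real.sqrt_nonneg _), alpha₀]
  ring

lemma eta₂_pos {t : ℝ} (ht : |t - 2 * c| < 4 * √ω) : 0 < eta₂ ω c t := by
  suffices t - 4 * c < √(quadA ω c t) by unfold eta₂; linarith
  rcases lt_or_ge (t - 4 * c) 0 with hneg | hnonneg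
  · exact hneg.trans_le (Real.sqrt_nonneg _)
  refine (Real.lt_sqrt hnonneg).2 ?_
  have hω : 0 < ω := Real.sqrt_pos.1 (by linarith [abs_nonneg (t - 2 * c)])
  have h16 : (t - 2 * c) ^ 2 < 16 * ω := by
    have := sq_lt_sq' (abs_lt.1 ht).1 (abs_lt.1 ht).2
    rw [mul_pow, Real.sq_sqrt hω.le] at this
    linarith
  have hdiff : quadA ω c t - (t - 4 * c) ^ 2 = 4 * (16 * ω - (t - 2 * c) ^ 2) := by
    unfold quadA; ring
  linarith

end

theorem stmt_2 (ω c : ℝ) (hWC : ω > c ^ 2 / 4 ∨ (ω = c ^ 2 / 4 ∧ c > 0))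
    (α₀ α₁ : ℝ)
    (hα₀ : α₀ = (4 * c + Real.sqrt (48 * ω + 4 * c ^ 2)) / 3)
    (hα₁ : α₁ = 4 * Real.sqrt ω + 2 * c)
    (η₂ : ℝ → ℝ)
    (hη₂ : ∀ t, η₂ t = (-t + 4 * c + Real.sqrt (64 * ω - 3 * t ^ 2 + 8 * c * t)) / 2) :
    StrictAntiOn η₂ (Set.Ioo α₀ α₁) ∧
      ∀ t ∈ Set.Ioo α₀ α₁, 0 < η₂ t ∧ η₂ t < α₀ := by
  have hω : 0 ≤ ω := by
    rcases hWC with h | ⟨h, -⟩ <;> nlinarith [sq_nonneg c]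
  obtain rfl : η₂ = eta₂ ω c := funext hη₂
  obtain rfl : α₀ = alpha₀ ω c := hα₀
  subst hα₁
  have hanti := eta₂_strictAntiOn ω c
  have hα₀_mem : alpha₀ ω c ∈ Ici (4 * c / 3) := four_mul_div_three_le_alpha₀ ω c
  have hsub : Ioo (alpha₀ ω c) (4 * √ω + 2 * c) ⊆ Ici (4 * c / 3) :=
    fun t ht => hα₀_mem.trans ht.1.le
  refine ⟨hanti.mono hsub, fun t ht => ⟨eta₂_pos c ?_, ?_⟩⟩
  · have := two_mul_le_alpha₀ c hω
    exact abs_lt.2 ⟨by linarith [ht.1, Real.sqrt_nonneg ω], by linarith [ht.2]⟩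
  · simpa only [eta₂_alpha₀ c hω] using hanti hα₀_mem (hsub ht) ht.1
end

section
/- Fix s ∈ (−1, 1] and define ξ(η) = (−η + 2s + √(f_s(η)))/2. Then for every η ∈ (β₀(s), β₁(s)), the function ξ is differentiable at η and its derivative satisfies ξ'(η) < −1/2. -/
/-
With f_s(η) = -3η² + 4sη + 4 one has ξ'(η) = (-1 + f_s'(η) / (2√f_s(η))) / 2, so the claim amounts
to f_s'(η) = 4s - 6η < 0 and f_s(η) > 0. The first holds since η > β₀(s) > 2s/3; the second since f_s
decreases past its vertex 2s/3 and f_s(1 + s) = (s - 1)² ≥ 0.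
-/

open Real

lemma hasDerivAt_quadratic (s η : ℝ) :
    HasDerivAt (fun x : ℝ => -3 * x ^ 2 + 4 * s * x + 4) (-6 * η + 4 * s) η :=
  ((((hasDerivAt_pow 2 η).const_mul (-3)).fun_add
    ((hasDerivAt_id' η).const_mul (4 * s))).add_const 4).congr_deriv (by norm_num; ring)

lemma quadratic_pos_of_mem_Ioo {s η : ℝ} (hη : η ∈ Set.Ioo (2 * s / 3) (1 + s)) :
    0 < -3 * η ^ 2 + 4 * s * η + 4 := by
  obtain ⟨h₁, h₂⟩ := hη
  have key : -3 * η ^ 2 + 4 * s * η + 4 = (s - 1) ^ 2 + (1 + s - η) * (3 * η + 3 - s) := by ring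
  rw [key]
  have : 0 < 3 * η + 3 - s := by linarith
  positivity

lemma hasDerivAt_xi {s η : ℝ} (hf : -3 * η ^ 2 + 4 * s * η + 4 ≠ 0) :
    HasDerivAt (fun x : ℝ => (-x + 2 * s + √(-3 * x ^ 2 + 4 * s * x + 4)) / 2)
      ((-1 + (-6 * η + 4 * s) / (2 * √(-3 * η ^ 2 + 4 * s * η + 4))) / 2) η :=
  ((((hasDerivAt_id η).neg).add_const (2 * s)).add ((hasDerivAt_quadratic s η).sqrt hf)).div_const 2

lemma xi_deriv_lt {s η : ℝ} (hη : η ∈ Set.Ioo (2 * s / 3) (1 + s)) :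
    (-1 + (-6 * η + 4 * s) / (2 * √(-3 * η ^ 2 + 4 * s * η + 4))) / 2 < -1 / 2 := by
  have hsqrt : 0 < √(-3 * η ^ 2 + 4 * s * η + 4) := sqrt_pos.2 (quadratic_pos_of_mem_Ioo hη)
  have hneg : (-6 * η + 4 * s) / (2 * √(-3 * η ^ 2 + 4 * s * η + 4)) < 0 :=
    div_neg_of_neg_of_pos (by linarith [hη.1]) (by positivity)
  linarith

theorem stmt_3_general (s : ℝ)
    (ξ : ℝ → ℝ)
    (hξ : ∀ η, ξ η = (-η + 2 * s + Real.sqrt (-3 * η ^ 2 + 4 * s * η + 4)) / 2) :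
    ∀ η ∈ Set.Ioo ((2 * s + Real.sqrt (3 + s ^ 2)) / 3) (1 + s),
      DifferentiableAt ℝ ξ η ∧ deriv ξ η < -1 / 2 := by
  intro η hη
  have hη' : η ∈ Set.Ioo (2 * s / 3) (1 + s) :=
    ⟨by linarith [hη.1, sqrt_pos.2 (by positivity : (0 : ℝ) < 3 + s ^ 2)], hη.2⟩
  obtain rfl : ξ = fun x => (-x + 2 * s + √(-3 * x ^ 2 + 4 * s * x + 4)) / 2 := funext hξ
  have hD := hasDerivAt_xi (quadratic_pos_of_mem_Ioo hη').ne'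
  exact ⟨hD.differentiableAt, hD.deriv ▸ xi_deriv_lt hη'⟩

theorem stmt_3 (s : ℝ) (hs : s ∈ Set.Ioc (-1 : ℝ) 1)
    (ξ : ℝ → ℝ)
    (hξ : ∀ η, ξ η = (-η + 2 * s + Real.sqrt (-3 * η ^ 2 + 4 * s * η + 4)) / 2) :
    ∀ η ∈ Set.Ioo ((2 * s + Real.sqrt (3 + s ^ 2)) / 3) (1 + s),
      DifferentiableAt ℝ ξ η ∧ deriv ξ η < -1 / 2 :=
  stmt_3_general s ξ hξ
end

section
/- Fix s ∈ (−1, 1]. The function η ↦ k²(η) = (3η² + (√(f_s(η)) − 6s)η + 2(s² − 1))/(2η√(f_s(η))) is strictly increasing on the open interval (β₀(s), β₁(s)), and 0 < k²(η) < 1 for every η ∈ (β₀(s), β₁(s)). -/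
/-!
Write `k² = (1 + R) / 2` with `R = P / (η √f)` and `P = 3η² - 6sη + 2(s² - 1)`. Then `0 < k² < 1`
says `P² < η² f`, and `η² f - P² = 4 q (1 + s - η)(1 + η - s)` where `q = 3η² - 4sη + s² - 1`
is positive exactly to the right of its larger root `β₀(s)`. For monotonicity,
`R' = 4 (2(1 - s²) + 3sη(1 - (η - s)²)) / (η² f √f)`, whose numerator is positive on the interval.
-/

namespace KSq

/-- The larger root of `3 η ^ 2 - 4 s η + s ^ 2 - 1`. -/
noncomputable def β₀ (s : ℝ) : ℝ := (2 * s + √(3 + s ^ 2)) / 3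

def radicand (s η : ℝ) : ℝ := -3 * η ^ 2 + 4 * s * η + 4

def numer (s η : ℝ) : ℝ := 3 * η ^ 2 - 6 * s * η + 2 * (s ^ 2 - 1)

noncomputable def ratio (s η : ℝ) : ℝ := numer s η / (η * √(radicand s η))

lemma radicand_pos {s η : ℝ} (hs : s ≤ 1) (hη₀ : 0 ≤ η) (hη₁ : η < 1 + s) :
    0 < radicand s η := by
  unfold radicand
  nlinarith [sq_nonneg (s - 1)]

lemma pos_of_β₀_lt {s η : ℝ} (hs : -1 ≤ s) (hη : β₀ s < η) :
    0 < η := by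
  rw [β₀] at hη
  rcases le_or_gt 0 s with h | h
  · have : 0 < √(3 + s ^ 2) := Real.sqrt_pos.mpr (by positivity)
    linarith
  · have : -2 * s ≤ √(3 + s ^ 2) := Real.le_sqrt_of_sq_le (by nlinarith)
    linarith

lemma lt_of_β₀_lt {s η : ℝ} (hη : β₀ s < η) : s < η := by
  rw [β₀] at hη
  have : s < √(3 + s ^ 2) := Real.lt_sqrt_of_sq_lt (by nlinarith)
  linarith

lemma quadratic_pos_of_β₀_lt {s η : ℝ} (hη : β₀ s < η) :
    0 < 3 * η ^ 2 - 4 * s * η + s ^ 2 - 1 := by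
  rw [β₀] at hη
  have hsq : √(3 + s ^ 2) ^ 2 = 3 + s ^ 2 := Real.sq_sqrt (by positivity)
  have hlt : √(3 + s ^ 2) < 3 * η - 2 * s := by linarith
  nlinarith [Real.sqrt_nonneg (3 + s ^ 2)]

lemma div_eq_one_add_ratio_div_two {s η : ℝ} (hη : η ≠ 0) (hf : 0 < radicand s η) :
    (3 * η ^ 2 + (√(radicand s η) - 6 * s) * η + 2 * (s ^ 2 - 1)) / (2 * η * √(radicand s η)) =
      (1 + ratio s η) / 2 := by
  have hw : √(radicand s η) ≠ 0 := (Real.sqrt_pos.mpr hf).ne'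
  rw [ratio, numer]
  field_simp
  ring

lemma sq_mul_radicand_sub_numer_sq (s η : ℝ) :
    η ^ 2 * radicand s η - numer s η ^ 2 =
      4 * (3 * η ^ 2 - 4 * s * η + s ^ 2 - 1) * (1 + s - η) * (1 + η - s) := by
  unfold radicand numer; ring

lemma abs_ratio_lt_one {s η : ℝ} (hs : -1 ≤ s) (hs' : s ≤ 1)
    (hη₀ : β₀ s < η) (hη₁ : η < 1 + s) : |ratio s η| < 1 := by
  have hpos := pos_of_β₀_lt hs hη₀
  have hden : 0 < η * √(radicand s η) :=
    mul_pos hpos (Real.sqrt_pos.mpr (radicand_pos hs' hpos.le hη₁))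
  have hsq : numer s η ^ 2 < (η * √(radicand s η)) ^ 2 := by
    rw [mul_pow, Real.sq_sqrt (radicand_pos hs' hpos.le hη₁).le, ← sub_pos,
      sq_mul_radicand_sub_numer_sq]
    have := quadratic_pos_of_β₀_lt hη₀
    have := lt_of_β₀_lt hη₀
    have : 0 < 1 + s - η := by linarith
    have : 0 < 1 + η - s := by linarith
    positivity
  rw [ratio, abs_div, abs_of_pos hden, div_lt_one hden]
  exact abs_lt_of_sq_lt_sq hsq hden.le

lemma hasDerivAt_ratio {s η : ℝ} (hη : η ≠ 0) (hf : 0 < radicand s η) :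
    HasDerivAt (ratio s)
      (4 * (2 * (1 - s ^ 2) + 3 * s * η * (1 - (η - s) ^ 2)) /
        (η ^ 2 * radicand s η * √(radicand s η))) η := by
  have hf' : HasDerivAt (radicand s) (4 * s - 6 * η) η :=
    ((((hasDerivAt_pow 2 η).const_mul (-3)).add
      ((hasDerivAt_id η).const_mul (4 * s))).add_const 4).congr_deriv (by ring)
  have hP : HasDerivAt (numer s) (6 * η - 6 * s) η :=
    ((((hasDerivAt_pow 2 η).const_mul 3).sub
      ((hasDerivAt_id η).const_mul (6 * s))).add_const (2 * (s ^ 2 - 1))).congr_deriv (by ring)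
  have hwpos : 0 < √(radicand s η) := Real.sqrt_pos.mpr hf
  have hw2 : √(radicand s η) ^ 2 = radicand s η := Real.sq_sqrt hf.le
  refine (hP.div ((hasDerivAt_id η).mul (hf'.sqrt hf.ne')) (mul_ne_zero hη hwpos.ne')).congr_deriv ?_
  simp only [Pi.mul_apply, id_eq]
  field_simp
  rw [hw2]
  unfold numer radicand
  ring

lemma deriv_numerator_pos {s η : ℝ} (hs : -1 < s) (hs' : s ≤ 1) (hη₀ : 0 < η)
    (hη₁ : η < 1 + s) (hη₂ : s < η + 1) :
    0 < 2 * (1 - s ^ 2) + 3 * s * η * (1 - (η - s) ^ 2) := by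
  have h₁ : 0 < 1 + s - η := by linarith
  have h₂ : 0 < 1 + η - s := by linarith
  rcases le_or_gt 0 s with hs₀ | hs₀
  · have hX := mul_pos (mul_pos hη₀ h₁) h₂
    rcases hs'.lt_or_eq with hs₁ | rfl
    · nlinarith [mul_nonneg hs₀ hX.le]
    · nlinarith
  · nlinarith [mul_pos (mul_pos hη₀ h₁) h₂, sq_nonneg (1 + s - 2 * η)]

lemma strictMonoOn_ratio {s : ℝ} (hs : -1 < s) (hs' : s ≤ 1) :
    StrictMonoOn (ratio s) (Set.Ioo (β₀ s) (1 + s)) := by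
  have hderiv : ∀ η ∈ Set.Ioo (β₀ s) (1 + s),
      ∃ r, HasDerivAt (ratio s) r η ∧ 0 < r := by
    rintro η ⟨hη₀, hη₁⟩
    have hpos := pos_of_β₀_lt hs.le hη₀
    have hf := radicand_pos hs' hpos.le hη₁
    have := deriv_numerator_pos hs hs' hpos hη₁ (by linarith [lt_of_β₀_lt hη₀])
    exact ⟨_, hasDerivAt_ratio hpos.ne' hf, by positivity⟩
  refine strictMonoOn_of_deriv_pos (convex_Ioo _ _) (fun η hη => ?_) (fun η hη => ?_)
  · obtain ⟨r, hr, -⟩ := hderiv η hη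
    exact hr.continuousAt.continuousWithinAt
  · rw [interior_Ioo] at hη
    obtain ⟨r, hr, hr₀⟩ := hderiv η hη
    rwa [hr.deriv]

end KSq

open KSq in
theorem stmt_5 (s : ℝ) (hs : s ∈ Set.Ioc (-1 : ℝ) 1)
    (ksq : ℝ → ℝ)
    (hksq : ∀ η, ksq η =
      (3 * η ^ 2 + (Real.sqrt (-3 * η ^ 2 + 4 * s * η + 4) - 6 * s) * η + 2 * (s ^ 2 - 1)) /
        (2 * η * Real.sqrt (-3 * η ^ 2 + 4 * s * η + 4))) :
    StrictMonoOn ksq (Set.Ioo ((2 * s + Real.sqrt (3 + s ^ 2)) / 3) (1 + s)) ∧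
      ∀ η ∈ Set.Ioo ((2 * s + Real.sqrt (3 + s ^ 2)) / 3) (1 + s),
        0 < ksq η ∧ ksq η < 1 := by
  obtain ⟨hs₀, hs₁⟩ := hs
  have hksq_ratio : ∀ η ∈ Set.Ioo (β₀ s) (1 + s),
      ksq η = (1 + ratio s η) / 2 := by
    rintro η ⟨hη₀, hη₁⟩
    have hpos := pos_of_β₀_lt hs₀.le hη₀
    rw [hksq]
    exact div_eq_one_add_ratio_div_two hpos.ne' (radicand_pos hs₁ hpos.le hη₁)
  refine ⟨fun a ha b hb hab => ?_, fun η hη => ?_⟩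
  · rw [hksq_ratio a ha, hksq_ratio b hb]
    linarith [strictMonoOn_ratio hs₀ hs₁ ha hb hab]
  · rw [hksq_ratio η hη]
    have := abs_lt.mp (abs_ratio_lt_one hs₀.le hs₁ hη.1 hη.2)
    constructor <;> linarith
end

section
/- Fix s ∈ (−1, 1]. For every η ∈ (β₀(s), β₁(s)), the function η ↦ k²(η) has derivative at η equal to (η / b_s(η)^{3/2}) · (6sη · g_s(η) + 4(1 − s²)), where b_s(η) = η² f_s(η) and g_s(η) = −(η − (s − 1))(η − (s + 1)). -/
open Real Set

/-!
On `(β₀(s), β₁(s))` both `η` and `f_s(η) = (1 + s - η)(3η + 3 - s) + (s - 1)²` are positive, so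
`k²` is a quotient of functions differentiable at `η`. With `q = √(f_s η)` one has
`b_s(η) ^ (3/2) = (η q) ^ 3`, and the quotient rule gives the claim once `q ^ 2` is replaced by
`f_s(η)`.
-/

def quadF (s x : ℝ) : ℝ := -3 * x ^ 2 + 4 * s * x + 4

lemma pos_and_quadF_pos_of_mem_Ioo {s η : ℝ} (hs : -1 < s)
    (hη : η ∈ Ioo ((2 * s + √(3 + s ^ 2)) / 3) (1 + s)) : 0 < η ∧ 0 < quadF s η := by
  obtain ⟨hlow, hupp⟩ := hη
  have hroot : √(3 + s ^ 2) ^ 2 = 3 + s ^ 2 := sq_sqrt (by positivity)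
  have hroot_pos : 0 < √(3 + s ^ 2) := sqrt_pos.mpr (by positivity)
  have hβ₀ : 0 ≤ 2 * s + √(3 + s ^ 2) := by nlinarith
  have hs_lt : s < η := by nlinarith
  have hfactor : quadF s η = (1 + s - η) * (3 * η + 3 - s) + (s - 1) ^ 2 := by
    unfold quadF; ring
  refine ⟨by linarith, ?_⟩
  rw [hfactor]
  exact add_pos_of_pos_of_nonneg (mul_pos (by linarith) (by linarith)) (sq_nonneg _)

lemma rpow_three_halves_sq_mul {x u : ℝ} (hx : 0 ≤ x) (hu : 0 ≤ u) :
    (x ^ 2 * u) ^ ((3 : ℝ) / 2) = (x * √u) ^ 3 := by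
  rw [show (3 : ℝ) / 2 = (1 / 2) * 3 by norm_num, rpow_mul (by positivity), ← sqrt_eq_rpow,
    sqrt_mul (sq_nonneg x), sqrt_sq hx]
  norm_cast

lemma hasDerivAt_sqrt_quadF {s η : ℝ} (hf : 0 < quadF s η) :
    HasDerivAt (fun x ↦ √(quadF s x)) ((2 * s - 3 * η) / √(quadF s η)) η := by
  have hpoly : HasDerivAt (quadF s) (-6 * η + 4 * s) η := by
    show HasDerivAt (fun x ↦ -3 * x ^ 2 + 4 * s * x + 4) _ η
    refine ((((hasDerivAt_pow 2 η).const_mul (-3)).add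
      ((hasDerivAt_id' η).const_mul (4 * s))).add_const 4).congr_deriv ?_
    ring
  convert hpoly.sqrt hf.ne' using 1
  field_simp
  ring

lemma hasDerivAt_ksq {s η : ℝ} (hη : 0 < η) (hf : 0 < quadF s η) :
    HasDerivAt
      (fun x ↦ (3 * x ^ 2 + (√(quadF s x) - 6 * s) * x + 2 * (s ^ 2 - 1)) / (2 * x * √(quadF s x)))
      (η / (η * √(quadF s η)) ^ 3 *
        (6 * s * η * (-(η - (s - 1)) * (η - (s + 1))) + 4 * (1 - s ^ 2))) η := by
  have hderiv_q := hasDerivAt_sqrt_quadF hf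
  set q := √(quadF s η) with hq_def
  have hq_pos : 0 < q := sqrt_pos.mpr hf
  have hq_sq : q ^ 2 = -3 * η ^ 2 + 4 * s * η + 4 := sq_sqrt hf.le
  have hnum := (((hasDerivAt_pow 2 η).const_mul 3).add
    ((hderiv_q.sub_const (6 * s)).mul (hasDerivAt_id' η))).add_const (2 * (s ^ 2 - 1))
  have hden := ((hasDerivAt_id' η).const_mul 2).mul hderiv_q
  refine (hnum.div hden (by simp only [Pi.mul_apply, ← hq_def]; positivity)).congr_deriv ?_
  simp only [Pi.mul_apply, Pi.add_apply, ← hq_def]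
  field_simp
  linear_combination (3 * η ^ 2 + 2 - 2 * s ^ 2) * hq_sq

theorem stmt_6 (s : ℝ) (hs : s ∈ Set.Ioc (-1 : ℝ) 1)
    (ksq : ℝ → ℝ)
    (hksq : ∀ η, ksq η =
      (3 * η ^ 2 + (Real.sqrt (-3 * η ^ 2 + 4 * s * η + 4) - 6 * s) * η + 2 * (s ^ 2 - 1)) /
        (2 * η * Real.sqrt (-3 * η ^ 2 + 4 * s * η + 4))) :
    ∀ η ∈ Set.Ioo ((2 * s + Real.sqrt (3 + s ^ 2)) / 3) (1 + s),
      HasDerivAt ksq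
        (η / (η ^ 2 * (-3 * η ^ 2 + 4 * s * η + 4)) ^ ((3 : ℝ) / 2) *
          (6 * s * η * (-(η - (s - 1)) * (η - (s + 1))) + 4 * (1 - s ^ 2))) η := by
  intro η hη
  obtain ⟨hη_pos, hf⟩ := pos_and_quadF_pos_of_mem_Ioo hs.1 hη
  have hderiv := hasDerivAt_ksq hη_pos hf
  rw [← rpow_three_halves_sq_mul hη_pos.le hf.le] at hderiv
  exact funext hksq ▸ hderiv
end

section
/- Fix s ∈ (−1, 1] and set g_s(η) = −(η − (s − 1))(η − (s + 1)). Then for every η ∈ (β₀(s), β₁(s)), one has 6sη · g_s(η) + 4(1 − s²) > 0. -/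
/-!
The lower endpoint `β₀(s)` only matters through `β₀(s) > 0`: the inequality holds for every
`η ∈ (0, 1 + s)`. There `g_s(η) = 1 - (η - s)²` lies in `(0, 1]`, so for `s ≥ 0` both terms are
nonnegative and one is positive, while for `s < 0` the bound `η g_s(η) < 1 + s` gives
`6 s η g_s(η) + 4 (1 - s²) > (1 + s)(4 + 2 s) > 0`.
-/

open Real

def g (s η : ℝ) : ℝ := -(η - (s - 1)) * (η - (s + 1))

lemma g_eq_one_sub_sq (s η : ℝ) : g s η = 1 - (η - s) ^ 2 := by
  unfold g
  ring

lemma g_le_one (s η : ℝ) : g s η ≤ 1 := by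
  rw [g_eq_one_sub_sq]
  linarith [sq_nonneg (η - s)]

lemma g_pos {s η : ℝ} (h₁ : s - 1 < η) (h₂ : η < s + 1) : 0 < g s η := by
  unfold g
  nlinarith

lemma two_mul_add_sqrt_three_add_sq_pos {s : ℝ} (hs : -1 < s) : 0 < 2 * s + √(3 + s ^ 2) := by
  have hsq := Real.sq_sqrt (show (0 : ℝ) ≤ 3 + s ^ 2 by positivity)
  nlinarith [Real.sqrt_nonneg (3 + s ^ 2)]

lemma six_mul_mul_g_add_pos {s η : ℝ} (hs₁ : -1 < s) (hs₂ : s ≤ 1) (hη₀ : 0 < η)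
    (hη₁ : η < 1 + s) : 0 < 6 * s * η * g s η + 4 * (1 - s ^ 2) := by
  rcases lt_trichotomy s 0 with hneg | rfl | hpos
  · have hηg : η * g s η < 1 + s := (mul_le_of_le_one_right hη₀.le (g_le_one s η)).trans_lt hη₁
    nlinarith [mul_lt_mul_of_neg_left hηg hneg]
  · norm_num
  · have hg : 0 < g s η := g_pos (by linarith) (by linarith)
    have : 0 < 6 * s * η * g s η := by positivity
    nlinarith

theorem stmt_7 (s : ℝ) (hs : s ∈ Set.Ioc (-1 : ℝ) 1) :
    ∀ η ∈ Set.Ioo ((2 * s + Real.sqrt (3 + s ^ 2)) / 3) (1 + s),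
      6 * s * η * (-(η - (s - 1)) * (η - (s + 1))) + 4 * (1 - s ^ 2) > 0 := by
  rintro η ⟨hβ₀, hβ₁⟩
  have hη₀ : 0 < η := (div_pos (two_mul_add_sqrt_three_add_sq_pos hs.1) three_pos).trans hβ₀
  exact six_mul_mul_g_add_pos hs.1 hs.2 hη₀ hβ₁
end

section
/- Define h(s) = (4/9)(−s⁴ + s(3 + s²)^{3/2} + 9). Then h is strictly increasing on the interval [−1, 0], h(−1) = 0, and h(0) = 4. -/
/-! On `s ≤ 0` both `-s⁴` and `s (3 + s²)^{3/2} = -(|s| (3 + s²)^{3/2})` are strictly increasing,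
since `|s|` and `s²` decrease as `s` increases to `0`; the endpoint values follow from
`4^{3/2} = 8`. -/

open Real Set

lemma Even.strictAntiOn_pow_Iic {n : ℕ} (hn : Even n) (hn0 : n ≠ 0) :
    StrictAntiOn (fun s : ℝ => s ^ n) (Iic 0) := by
  intro s hs t ht hst
  simp only
  rw [← hn.neg_pow s, ← hn.neg_pow t]
  exact pow_lt_pow_left₀ (neg_lt_neg hst) (neg_nonneg.2 ht) hn0

lemma strictMonoOn_mul_rpow_add_sq_Iic {a p : ℝ} (ha : 0 ≤ a) (hp : 0 < p) :
    StrictMonoOn (fun s : ℝ => s * (a + s ^ 2) ^ p) (Iic 0) := by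
  intro s hs t ht hst
  have hsq : a + t ^ 2 < a + s ^ 2 := by
    have := Even.strictAntiOn_pow_Iic even_two two_ne_zero hs ht hst
    simp only at this
    linarith
  have hpow : (a + t ^ 2) ^ p < (a + s ^ 2) ^ p :=
    rpow_lt_rpow (by positivity) hsq hp
  have := mul_lt_mul'' (neg_lt_neg hst) hpow (neg_nonneg.2 ht) (by positivity)
  simp only
  linarith

lemma four_rpow_three_halves : (4 : ℝ) ^ ((3 : ℝ) / 2) = 8 := by
  rw [show (4 : ℝ) = 2 ^ (2 : ℝ) by norm_num, ← rpow_mul (by norm_num)]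
  norm_num

theorem stmt_8 (h : ℝ → ℝ)
    (hh : ∀ s, h s = 4 / 9 * (-s ^ 4 + s * (3 + s ^ 2) ^ ((3 : ℝ) / 2) + 9)) :
    StrictMonoOn h (Set.Icc (-1 : ℝ) 0) ∧ h (-1) = 0 ∧ h 0 = 4 := by
  refine ⟨?_, ?_, ?_⟩
  · have hmono : StrictMonoOn (fun s : ℝ => -s ^ 4 + s * (3 + s ^ 2) ^ ((3 : ℝ) / 2)) (Iic 0) :=
      (Even.strictAntiOn_pow_Iic (by decide) (by decide)).neg.add
        (strictMonoOn_mul_rpow_add_sq_Iic (by norm_num) (by norm_num))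
    intro s hs t ht hst
    rw [hh, hh]
    have := hmono hs.2 ht.2 hst
    simp only at this
    linarith
  · rw [hh]
    norm_num [four_rpow_three_halves]
  · rw [hh]
    norm_num
end

section
/- Let (ω, c) ∈ ℝ² satisfy ω > c²/4. Then, as η₃ tends to α₁ from the left within (α₀, α₁): m(η₃)² tends to 1, and −η₃ m(η₃)²/η₁(η₃) tends to (2√ω + c)/(2√ω − c). -/
open Real Filter

/-!
At the endpoint `α₁ = 4√ω + 2c` the radicand `A(α₁)` is the perfect square `(4√ω - 2c)²`, so
`η₁(α₁) = 2c - 4√ω`, `η₂(α₁) = 0` and `m(α₁)² = 1`. Since `|c| < 2√ω`, no denominator vanishes at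
`α₁`, and both limits are the values at `α₁` of functions continuous there.
-/

namespace CnoidalEndpoint

noncomputable section

variable (ω c : ℝ)

def radicand (t : ℝ) : ℝ := 64 * ω - 3 * t ^ 2 + 8 * c * t

def eta1 (t : ℝ) : ℝ := (-t + 4 * c - √(radicand ω c t)) / 2

def eta2 (t : ℝ) : ℝ := (-t + 4 * c + √(radicand ω c t)) / 2

def modulusSq (t : ℝ) : ℝ := -eta1 ω c t * (t - eta2 ω c t) / (t * (eta2 ω c t - eta1 ω c t))

theorem continuous_eta1 : Continuous (eta1 ω c) := by
  unfold eta1 radicand; fun_prop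

theorem continuous_eta2 : Continuous (eta2 ω c) := by
  unfold eta2 radicand; fun_prop

theorem continuousAt_modulusSq {t : ℝ} (ht : t * (eta2 ω c t - eta1 ω c t) ≠ 0) :
    ContinuousAt (modulusSq ω c) t :=
  (((continuous_eta1 ω c).neg.mul (continuous_id.sub (continuous_eta2 ω c))).continuousAt).div
    (continuous_id.mul ((continuous_eta2 ω c).sub (continuous_eta1 ω c))).continuousAt ht

variable {ω c}

theorem abs_lt_two_sqrt_of_sq_div_four_lt (h : c ^ 2 / 4 < ω) : |c| < 2 * √ω := by
  have hω : 0 ≤ ω := by linarith [sq_nonneg c]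
  refine abs_lt_of_sq_lt_sq ?_ (by positivity)
  rw [mul_pow, sq_sqrt hω]
  linarith

theorem radicand_endpoint (hω : 0 ≤ ω) :
    radicand ω c (4 * √ω + 2 * c) = (4 * √ω - 2 * c) ^ 2 := by
  unfold radicand
  linear_combination (-64) * sq_sqrt hω

theorem sqrt_radicand_endpoint (hω : 0 ≤ ω) (hc : c ≤ 2 * √ω) :
    √(radicand ω c (4 * √ω + 2 * c)) = 4 * √ω - 2 * c := by
  rw [radicand_endpoint hω, sqrt_sq (by linarith)]

theorem eta1_endpoint (hω : 0 ≤ ω) (hc : c ≤ 2 * √ω) :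
    eta1 ω c (4 * √ω + 2 * c) = 2 * c - 4 * √ω := by
  rw [eta1, sqrt_radicand_endpoint hω hc]; ring

theorem eta2_endpoint (hω : 0 ≤ ω) (hc : c ≤ 2 * √ω) :
    eta2 ω c (4 * √ω + 2 * c) = 0 := by
  rw [eta2, sqrt_radicand_endpoint hω hc]; ring

theorem modulusSq_endpoint (hω : 0 ≤ ω) (hc : |c| < 2 * √ω) :
    modulusSq ω c (4 * √ω + 2 * c) = 1 := by
  obtain ⟨hc₁, hc₂⟩ := abs_lt.mp hc
  rw [modulusSq, eta1_endpoint hω hc₂.le, eta2_endpoint hω hc₂.le, div_eq_one_iff_eq]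
  · ring
  · nlinarith

theorem continuousAt_modulusSq_endpoint (hω : 0 ≤ ω) (hc : |c| < 2 * √ω) :
    ContinuousAt (modulusSq ω c) (4 * √ω + 2 * c) := by
  obtain ⟨hc₁, hc₂⟩ := abs_lt.mp hc
  apply continuousAt_modulusSq
  rw [eta1_endpoint hω hc₂.le, eta2_endpoint hω hc₂.le]
  nlinarith

end

end CnoidalEndpoint

open CnoidalEndpoint

theorem stmt_9_general (ω c : ℝ) (hWC : ω > c ^ 2 / 4)
    (α₀ α₁ : ℝ)
    (hα₁ : α₁ = 4 * Real.sqrt ω + 2 * c)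
    (η₁ η₂ m : ℝ → ℝ)
    (hη₁ : ∀ t, η₁ t = (-t + 4 * c - Real.sqrt (64 * ω - 3 * t ^ 2 + 8 * c * t)) / 2)
    (hη₂ : ∀ t, η₂ t = (-t + 4 * c + Real.sqrt (64 * ω - 3 * t ^ 2 + 8 * c * t)) / 2)
    (hm : ∀ t, m t = Real.sqrt ((-η₁ t) * (t - η₂ t) / (t * (η₂ t - η₁ t)))) :
    Tendsto (fun t => m t ^ 2) (nhdsWithin α₁ (Set.Ioo α₀ α₁)) (nhds 1) ∧
    Tendsto (fun t => -t * m t ^ 2 / η₁ t) (nhdsWithin α₁ (Set.Ioo α₀ α₁))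
      (nhds ((2 * Real.sqrt ω + c) / (2 * Real.sqrt ω - c))) := by
  obtain rfl : η₁ = eta1 ω c := funext hη₁
  obtain rfl : η₂ = eta2 ω c := funext hη₂
  obtain rfl : m = fun t => √(modulusSq ω c t) := funext hm
  subst hα₁
  have hω : 0 ≤ ω := by linarith [sq_nonneg c]
  have hc := abs_lt_two_sqrt_of_sq_div_four_lt hWC
  have hc_lt : c < 2 * √ω := (le_abs_self c).trans_lt hc
  have hm_sq : ContinuousAt (fun t => √(modulusSq ω c t) ^ 2) (4 * √ω + 2 * c) :=
    (continuous_sqrt.continuousAt.comp (continuousAt_modulusSq_endpoint hω hc)).pow 2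
  have hη₁_ne : eta1 ω c (4 * √ω + 2 * c) ≠ 0 := by rw [eta1_endpoint hω hc_lt.le]; linarith
  have h_quot : ContinuousAt (fun t => -t * √(modulusSq ω c t) ^ 2 / eta1 ω c t)
      (4 * √ω + 2 * c) :=
    (continuousAt_neg.mul hm_sq).div (continuous_eta1 ω c).continuousAt hη₁_ne
  refine ⟨?_, ?_⟩
  · convert hm_sq.continuousWithinAt.tendsto using 2
    rw [modulusSq_endpoint hω hc, sqrt_one, one_pow]
  · convert h_quot.continuousWithinAt.tendsto using 2
    rw [modulusSq_endpoint hω hc, sqrt_one, one_pow, eta1_endpoint hω hc_lt.le,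
      div_eq_div_iff (by linarith) (by linarith)]
    ring

theorem stmt_9 (ω c : ℝ) (hWC : ω > c ^ 2 / 4)
    (α₀ α₁ : ℝ)
    (hα₀ : α₀ = (4 * c + Real.sqrt (48 * ω + 4 * c ^ 2)) / 3)
    (hα₁ : α₁ = 4 * Real.sqrt ω + 2 * c)
    (η₁ η₂ m : ℝ → ℝ)
    (hη₁ : ∀ t, η₁ t = (-t + 4 * c - Real.sqrt (64 * ω - 3 * t ^ 2 + 8 * c * t)) / 2)
    (hη₂ : ∀ t, η₂ t = (-t + 4 * c + Real.sqrt (64 * ω - 3 * t ^ 2 + 8 * c * t)) / 2)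
    (hm : ∀ t, m t = Real.sqrt ((-η₁ t) * (t - η₂ t) / (t * (η₂ t - η₁ t)))) :
    Tendsto (fun t => m t ^ 2) (nhdsWithin α₁ (Set.Ioo α₀ α₁)) (nhds 1) ∧
    Tendsto (fun t => -t * m t ^ 2 / η₁ t) (nhdsWithin α₁ (Set.Ioo α₀ α₁))
      (nhds ((2 * Real.sqrt ω + c) / (2 * Real.sqrt ω - c))) :=
  stmt_9_general ω c hWC α₀ α₁ hα₁ η₁ η₂ m hη₁ hη₂ hm
end

section
/- Let ω = c²/4 with c > 0. Then: (i) for s = 1 and every η ∈ (4/3, 2), the identity k²(η) = 1/2 − (3/2)·√(2 − η)/√(3η + 2) holds; (ii) as η₃ tends to α₁ from the left within (α₀, α₁), m(η₃)² tends to 1/2 and −η₃ m(η₃)²/η₁(η₃) tends to +∞. -/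
open Real Filter Topology

/-!
With `ω = c²/4` the discriminant factors as `A(t) = (4c - t)(3t + 4c)` and `f₁(η) = (2 - η)(3η + 2)`,
so every square root splits into a product of two, and both claims become algebra. At `t = α₁ = 4c`
the factor `√(4c - t)` vanishes, which cancels the `0/0` in `m²` (leaving a continuous expression
with value `1/2`) and makes `η₁` tend to `0` from below.
-/

theorem ksq_eq_of_factor {η : ℝ} (hη : η ≠ 0) (h₁ : -2 / 3 < η) (h₂ : η < 2) :
    (3 * η ^ 2 + (√(-3 * η ^ 2 + 4 * η + 4) - 6) * η) / (2 * η * √(-3 * η ^ 2 + 4 * η + 4)) =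
      1 / 2 - 3 / 2 * (√(2 - η) / √(3 * η + 2)) := by
  have ha : 0 < 2 - η := by linarith
  have hb : 0 < 3 * η + 2 := by linarith
  have hsplit : √(-3 * η ^ 2 + 4 * η + 4) = √(2 - η) * √(3 * η + 2) := by
    rw [← Real.sqrt_mul ha.le]; ring_nf
  have ha0 := (Real.sqrt_pos.mpr ha).ne'
  have hb0 := (Real.sqrt_pos.mpr hb).ne'
  rw [hsplit]
  field_simp
  linear_combination 3 * Real.sq_sqrt ha.le

noncomputable def mSqClosed (c t : ℝ) : ℝ :=
  (√(3 * t + 4 * c) - √(4 * c - t)) * (3 * t - 4 * c - √(4 * c - t) * √(3 * t + 4 * c)) /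
    (4 * t * √(3 * t + 4 * c))

theorem tendsto_mSqClosed {c : ℝ} (hc : 0 < c) :
    Tendsto (mSqClosed c) (𝓝 (4 * c)) (𝓝 (1 / 2)) := by
  have hp : 0 < √(3 * (4 * c) + 4 * c) := Real.sqrt_pos.mpr (by linarith)
  have hval : mSqClosed c (4 * c) = 1 / 2 := by
    simp only [mSqClosed, sub_self, Real.sqrt_zero, sub_zero, zero_mul]
    field_simp
    ring
  rw [← hval]
  exact ContinuousAt.tendsto (by unfold mSqClosed; fun_prop (disch := positivity))

theorem m_sq_ratio_eq {c t q p : ℝ} (ht : t ≠ 0) (hq : q ≠ 0) (hp : p ≠ 0) (hq2 : q ^ 2 = 4 * c - t) :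
    -((-t + 4 * c - q * p) / 2) * (t - (-t + 4 * c + q * p) / 2) /
        (t * ((-t + 4 * c + q * p) / 2 - (-t + 4 * c - q * p) / 2)) =
      (p - q) * (3 * t - 4 * c - q * p) / (4 * t * p) := by
  field_simp
  linear_combination (4 * p * (3 * t - 4 * c - q * p)) * hq2

theorem eventually_pos_nhdsLT {a : ℝ} (ha : 0 < a) : ∀ᶠ t in 𝓝[<] a, 0 < t :=
  eventually_nhdsWithin_of_eventually_nhds (eventually_gt_nhds ha)

theorem tendsto_m_sq_ratio {c : ℝ} (hc : 0 < c) :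
    Tendsto (fun t => -((-t + 4 * c - √((4 * c - t) * (3 * t + 4 * c))) / 2) *
        (t - (-t + 4 * c + √((4 * c - t) * (3 * t + 4 * c))) / 2) /
        (t * ((-t + 4 * c + √((4 * c - t) * (3 * t + 4 * c))) / 2 -
          (-t + 4 * c - √((4 * c - t) * (3 * t + 4 * c))) / 2)))
      (𝓝[<] (4 * c)) (𝓝 (1 / 2)) := by
  refine ((tendsto_mSqClosed hc).mono_left nhdsWithin_le_nhds).congr' ?_
  filter_upwards [eventually_pos_nhdsLT (by linarith : 0 < 4 * c), self_mem_nhdsWithin]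
    with t ht (htc : t < 4 * c)
  rw [Real.sqrt_mul (by linarith), m_sq_ratio_eq ht.ne' (Real.sqrt_pos.mpr (by linarith)).ne'
    (Real.sqrt_pos.mpr (by linarith)).ne' (Real.sq_sqrt (by linarith))]
  rfl

theorem tendsto_neg_small_root {c : ℝ} (hc : 0 < c) :
    Tendsto (fun t => -((-t + 4 * c - √((4 * c - t) * (3 * t + 4 * c))) / 2))
      (𝓝[<] (4 * c)) (𝓝[>] 0) := by
  refine tendsto_nhdsWithin_iff.mpr ⟨?_, ?_⟩
  · have hcont : ContinuousAt (fun t => -((-t + 4 * c - √((4 * c - t) * (3 * t + 4 * c))) / 2))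
        (4 * c) := by fun_prop
    simpa using hcont.tendsto.mono_left nhdsWithin_le_nhds
  · filter_upwards [eventually_pos_nhdsLT (by linarith : 0 < 4 * c), self_mem_nhdsWithin]
      with t ht (htc : t < 4 * c)
    have hsq : (4 * c - t) ^ 2 < (4 * c - t) * (3 * t + 4 * c) := by nlinarith
    rw [Set.mem_Ioi]
    linarith [Real.lt_sqrt_of_sq_lt hsq]

theorem stmt_10 (ω c : ℝ) (hω : ω = c ^ 2 / 4) (hc : c > 0)
    (α₀ α₁ : ℝ)
    (hα₀ : α₀ = (4 * c + Real.sqrt (48 * ω + 4 * c ^ 2)) / 3)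
    (hα₁ : α₁ = 4 * Real.sqrt ω + 2 * c)
    (η₁ η₂ m : ℝ → ℝ)
    (hη₁ : ∀ t, η₁ t = (-t + 4 * c - Real.sqrt (64 * ω - 3 * t ^ 2 + 8 * c * t)) / 2)
    (hη₂ : ∀ t, η₂ t = (-t + 4 * c + Real.sqrt (64 * ω - 3 * t ^ 2 + 8 * c * t)) / 2)
    (hm : ∀ t, m t = Real.sqrt ((-η₁ t) * (t - η₂ t) / (t * (η₂ t - η₁ t))))
    (ksq : ℝ → ℝ)
    (hksq : ∀ η, ksq η =
      (3 * η ^ 2 + (Real.sqrt (-3 * η ^ 2 + 4 * 1 * η + 4) - 6 * 1) * η + 2 * ((1 : ℝ) ^ 2 - 1)) /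
        (2 * η * Real.sqrt (-3 * η ^ 2 + 4 * 1 * η + 4))) :
    (∀ η ∈ Set.Ioo ((4 : ℝ) / 3) 2,
        ksq η = 1 / 2 - 3 / 2 * (Real.sqrt (2 - η) / Real.sqrt (3 * η + 2))) ∧
    Tendsto (fun t => m t ^ 2) (nhdsWithin α₁ (Set.Ioo α₀ α₁)) (nhds (1 / 2)) ∧
    Tendsto (fun t => -t * m t ^ 2 / η₁ t) (nhdsWithin α₁ (Set.Ioo α₀ α₁)) atTop := by
  subst hω
  have hα₁' : α₁ = 4 * c := by
    rw [hα₁, show c ^ 2 / 4 = (c / 2) ^ 2 by ring, Real.sqrt_sq (by linarith)]; ring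
  have hα₀' : α₀ = 8 * c / 3 := by
    rw [hα₀, show 48 * (c ^ 2 / 4) + 4 * c ^ 2 = (4 * c) ^ 2 by ring, Real.sqrt_sq (by linarith)]; ring
  rw [hα₀', hα₁']
  refine ⟨fun η hη => ?_, ?_⟩
  · rw [hksq]
    simp only [mul_one, one_pow, sub_self, mul_zero, add_zero]
    exact ksq_eq_of_factor (by linarith [hη.1]) (by linarith [hη.1]) hη.2
  have hA : ∀ t, 64 * (c ^ 2 / 4) - 3 * t ^ 2 + 8 * c * t = (4 * c - t) * (3 * t + 4 * c) :=
    fun t => by ring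
  simp only [hA] at hη₁ hη₂
  have hl : 𝓝[Set.Ioo (8 * c / 3) (4 * c)] (4 * c) ≤ 𝓝[<] (4 * c) :=
    nhdsWithin_mono _ Set.Ioo_subset_Iio_self
  have hm2 : Tendsto (fun t => m t ^ 2) (𝓝[<] (4 * c)) (𝓝 (1 / 2)) := by
    simp only [hm, hη₁, hη₂]
    simpa only [Real.sq_sqrt (show (0 : ℝ) ≤ 1 / 2 by norm_num)]
      using (tendsto_m_sq_ratio hc).sqrt.pow 2
  have hη₁_lim : Tendsto (fun t => -η₁ t) (𝓝[<] (4 * c)) (𝓝[>] 0) := by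
    simpa only [hη₁] using tendsto_neg_small_root hc
  have hlim : Tendsto (fun t => m t ^ 2 * (t * (-η₁ t)⁻¹)) (𝓝[<] (4 * c)) atTop :=
    hm2.pos_mul_atTop (by norm_num) <| (tendsto_id.mono_left nhdsWithin_le_nhds).pos_mul_atTop
      (by linarith) hη₁_lim.inv_tendsto_nhdsGT_zero
  refine ⟨hm2.mono_left hl, (hlim.congr fun t => ?_).mono_left hl⟩
  rw [inv_neg, div_eq_mul_inv]
  ring
end

section
/- Let (ω, c) ∈ ℝ² satisfy condition (WC). Then, as η₃ tends to α₀ from the right within (α₀, α₁), T(η₃) tends to T₀(ω, c) = 4π / √(α₀ √(A(α₀))). -/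
/-!
At `η₃ = α₀` the root `η₂` collides with `η₃`, while `η₂ - η₁ = √A(α₀) > 0` stays away from zero, so
the modulus `m` tends to `0`. Since `π/2 ≤ K κ ≤ (π/2)/√(1 - κ²)`, `K` is continuous at `0` with
`K 0 = π/2`. Every ingredient of `T` is continuous at `α₀`, so the one-sided limit is a two-sided one.
-/

open Real Filter Topology

noncomputable def ellipticK (κ : ℝ) : ℝ :=
  ∫ θ in (0 : ℝ)..(π / 2), 1 / √(1 - κ ^ 2 * sin θ ^ 2)

section ellipticK

variable {κ : ℝ}

lemma one_sub_sq_mul_sin_sq_pos (hκ : κ ^ 2 < 1) (θ : ℝ) : 0 < 1 - κ ^ 2 * sin θ ^ 2 := by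
  nlinarith [sin_sq_le_one θ, sq_nonneg (sin θ)]

lemma intervalIntegrable_ellipticK_integrand (hκ : κ ^ 2 < 1) :
    IntervalIntegrable (fun θ => 1 / √(1 - κ ^ 2 * sin θ ^ 2)) MeasureTheory.volume 0 (π / 2) :=
  (continuous_const.div (by fun_prop)
    fun θ => (sqrt_pos.2 (one_sub_sq_mul_sin_sq_pos hκ θ)).ne').intervalIntegrable _ _

lemma pi_div_two_le_ellipticK (hκ : κ ^ 2 < 1) : π / 2 ≤ ellipticK κ := by
  have hle : ∀ θ ∈ Set.Icc (0 : ℝ) (π / 2), (1 : ℝ) ≤ 1 / √(1 - κ ^ 2 * sin θ ^ 2) := fun θ _ =>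
    one_le_one_div (sqrt_pos.2 (one_sub_sq_mul_sin_sq_pos hκ θ))
      (sqrt_le_one.2 (by nlinarith [sq_nonneg (sin θ), sq_nonneg κ]))
  simpa [ellipticK] using intervalIntegral.integral_mono_on (by positivity)
    intervalIntegrable_const (intervalIntegrable_ellipticK_integrand hκ) hle

lemma ellipticK_le (hκ : κ ^ 2 < 1) : ellipticK κ ≤ π / 2 / √(1 - κ ^ 2) := by
  have hle : ∀ θ ∈ Set.Icc (0 : ℝ) (π / 2),
      1 / √(1 - κ ^ 2 * sin θ ^ 2) ≤ 1 / √(1 - κ ^ 2) := fun θ _ =>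
    one_div_le_one_div_of_le (sqrt_pos.2 (by linarith))
      (sqrt_le_sqrt (by nlinarith [sin_sq_le_one θ, sq_nonneg κ]))
  have := intervalIntegral.integral_mono_on (by positivity)
    (intervalIntegrable_ellipticK_integrand hκ) intervalIntegrable_const hle
  rwa [intervalIntegral.integral_const, sub_zero, smul_eq_mul, mul_one_div] at this

lemma tendsto_ellipticK_zero : Tendsto ellipticK (𝓝 0) (𝓝 (π / 2)) := by
  have hsmall : ∀ᶠ κ : ℝ in 𝓝 0, κ ^ 2 < 1 := by
    simpa using (continuous_pow 2).continuousAt.eventually_lt continuousAt_const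
      (show (0 : ℝ) ^ 2 < 1 by norm_num)
  have hupper : Tendsto (fun κ : ℝ => π / 2 / √(1 - κ ^ 2)) (𝓝 0) (𝓝 (π / 2)) := by
    have : ContinuousAt (fun κ : ℝ => π / 2 / √(1 - κ ^ 2)) 0 :=
      continuousAt_const.div (by fun_prop) (by simp)
    simpa using this.tendsto
  exact tendsto_of_tendsto_of_tendsto_of_le_of_le' tendsto_const_nhds hupper
    (hsmall.mono fun _ => pi_div_two_le_ellipticK) (hsmall.mono fun _ => ellipticK_le)

end ellipticK

lemma tendsto_sqrt_modulus_zero {f g : ℝ → ℝ} {a : ℝ} (hf : ContinuousAt f a)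
    (hg : ContinuousAt g a) (hga : g a = a) (hne : a * (g a - f a) ≠ 0) :
    Tendsto (fun t => √(-f t * (t - g t) / (t * (g t - f t)))) (𝓝 a) (𝓝 0) := by
  have := ((hf.neg.mul (continuousAt_id.sub hg)).div (continuousAt_id.mul (hg.sub hf)) hne).sqrt
  simpa [hga] using this.tendsto

section WC

variable {ω c : ℝ}

lemma sqrt_discr_pos_of_WC (hWC : ω > c ^ 2 / 4 ∨ (ω = c ^ 2 / 4 ∧ c > 0)) :
    0 < √(48 * ω + 4 * c ^ 2) := by
  apply sqrt_pos.2
  rcases hWC with h | ⟨h, hc⟩ <;> nlinarith [sq_nonneg c]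

lemma alpha0_pos_of_WC (hWC : ω > c ^ 2 / 4 ∨ (ω = c ^ 2 / 4 ∧ c > 0)) :
    0 < (4 * c + √(48 * ω + 4 * c ^ 2)) / 3 := by
  have hs := sqrt_discr_pos_of_WC hWC
  have hs2 : √(48 * ω + 4 * c ^ 2) ^ 2 = 48 * ω + 4 * c ^ 2 := sq_sqrt (sqrt_pos.1 hs).le
  rcases hWC with h | ⟨h, hc⟩ <;> nlinarith

end WC

lemma sqrt_A_eq_of_three_mul_eq {ω c a s : ℝ} (hs : 0 ≤ s) (hs2 : s ^ 2 = 48 * ω + 4 * c ^ 2)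
    (ha : 3 * a = 4 * c + s) : √(64 * ω - 3 * a ^ 2 + 8 * c * a) = s := by
  rw [sqrt_eq_iff_eq_sq _ hs] <;> nlinarith

theorem stmt_12_general (ω c : ℝ) (hWC : ω > c ^ 2 / 4 ∨ (ω = c ^ 2 / 4 ∧ c > 0))
    (α₀ α₁ : ℝ)
    (hα₀ : α₀ = (4 * c + Real.sqrt (48 * ω + 4 * c ^ 2)) / 3)
    (η₁ η₂ m : ℝ → ℝ)
    (hη₁ : ∀ t, η₁ t = (-t + 4 * c - Real.sqrt (64 * ω - 3 * t ^ 2 + 8 * c * t)) / 2)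
    (hη₂ : ∀ t, η₂ t = (-t + 4 * c + Real.sqrt (64 * ω - 3 * t ^ 2 + 8 * c * t)) / 2)
    (hm : ∀ t, m t = Real.sqrt ((-η₁ t) * (t - η₂ t) / (t * (η₂ t - η₁ t))))
    (K T : ℝ → ℝ)
    (hK : ∀ κ, K κ = ∫ θ in (0 : ℝ)..(Real.pi / 2),
      1 / Real.sqrt (1 - κ ^ 2 * Real.sin θ ^ 2))
    (hT : ∀ t, T t = 8 * K (m t) /
      Real.sqrt (t * Real.sqrt (64 * ω - 3 * t ^ 2 + 8 * c * t))) :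
    Tendsto T (nhdsWithin α₀ (Set.Ioo α₀ α₁))
      (nhds (4 * Real.pi / Real.sqrt (α₀ * Real.sqrt (64 * ω - 3 * α₀ ^ 2 + 8 * c * α₀)))) := by
  set s := √(48 * ω + 4 * c ^ 2)
  have hs : 0 < s := sqrt_discr_pos_of_WC hWC
  have hα₀pos : 0 < α₀ := hα₀ ▸ alpha0_pos_of_WC hWC
  have hA₀ : √(64 * ω - 3 * α₀ ^ 2 + 8 * c * α₀) = s :=
    sqrt_A_eq_of_three_mul_eq hs.le (sq_sqrt (sqrt_pos.1 hs).le) (by rw [hα₀]; ring)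
  have hη₁c : ContinuousAt η₁ α₀ := by rw [funext hη₁]; fun_prop
  have hη₂c : ContinuousAt η₂ α₀ := by rw [funext hη₂]; fun_prop
  have hη₂α₀ : η₂ α₀ = α₀ := by rw [hη₂, hA₀]; linarith
  have hgap : η₂ α₀ - η₁ α₀ = s := by rw [hη₂, hη₁, hA₀]; ring
  have hm₀ : Tendsto m (𝓝 α₀) (𝓝 0) := by
    rw [funext hm]
    exact tendsto_sqrt_modulus_zero hη₁c hη₂c hη₂α₀ (by rw [hgap]; positivity)
  have hKm : Tendsto (fun t => K (m t)) (𝓝 α₀) (𝓝 (π / 2)) := by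
    rw [show K = ellipticK from funext hK]
    exact tendsto_ellipticK_zero.comp hm₀
  have hden : ContinuousAt (fun t : ℝ => √(t * √(64 * ω - 3 * t ^ 2 + 8 * c * t))) α₀ := by
    fun_prop
  have hT₀ := (hKm.const_mul 8).div hden.tendsto (by rw [hA₀]; positivity)
  rw [funext hT, show 4 * π = 8 * (π / 2) by ring]
  exact hT₀.mono_left nhdsWithin_le_nhds

theorem stmt_12 (ω c : ℝ) (hWC : ω > c ^ 2 / 4 ∨ (ω = c ^ 2 / 4 ∧ c > 0))
    (α₀ α₁ : ℝ)
    (hα₀ : α₀ = (4 * c + Real.sqrt (48 * ω + 4 * c ^ 2)) / 3)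
    (hα₁ : α₁ = 4 * Real.sqrt ω + 2 * c)
    (η₁ η₂ m : ℝ → ℝ)
    (hη₁ : ∀ t, η₁ t = (-t + 4 * c - Real.sqrt (64 * ω - 3 * t ^ 2 + 8 * c * t)) / 2)
    (hη₂ : ∀ t, η₂ t = (-t + 4 * c + Real.sqrt (64 * ω - 3 * t ^ 2 + 8 * c * t)) / 2)
    (hm : ∀ t, m t = Real.sqrt ((-η₁ t) * (t - η₂ t) / (t * (η₂ t - η₁ t))))
    (K T : ℝ → ℝ)
    (hK : ∀ κ, K κ = ∫ θ in (0 : ℝ)..(Real.pi / 2),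
      1 / Real.sqrt (1 - κ ^ 2 * Real.sin θ ^ 2))
    (hT : ∀ t, T t = 8 * K (m t) /
      Real.sqrt (t * Real.sqrt (64 * ω - 3 * t ^ 2 + 8 * c * t))) :
    Tendsto T (nhdsWithin α₀ (Set.Ioo α₀ α₁))
      (nhds (4 * Real.pi / Real.sqrt (α₀ * Real.sqrt (64 * ω - 3 * α₀ ^ 2 + 8 * c * α₀)))) :=
  stmt_12_general ω c hWC α₀ α₁ hα₀ η₁ η₂ m hη₁ hη₂ hm K T hK hT
end

section
/- Let (ω, c) ∈ ℝ² satisfy ω > c²/4. Then the mass of the soliton profile satisfies ∫_{−∞}^{∞} (4ω − c²)/(√ω · cosh(√(4ω − c²) x) − c/2) dx = 8 arctan(√((2√ω + c)/(2√ω − c))). -/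
/-!
Put `s = √ω`, `k = √(4ω - c²)` and `l = √((2s + c)/(2s - c))`, so that `k = l (2s - c)`.
With `u = kx/2` the denominator is `s cosh (2u) - c/2 = ((2s - c) cosh² u + (2s + c) sinh² u)/2`,
which makes `4 arctan (l tanh (kx/2))` an antiderivative of the integrand. The integrand is
positive, hence integrable, and the integral is the difference `4 arctan l - (-4 arctan l)` of the
limits of the antiderivative at `±∞`.
-/

open Real MeasureTheory Filter Set Topology

theorem integrable_of_hasDerivAt_of_nonneg {g g' : ℝ → ℝ} {m n : ℝ}
    (hderiv : ∀ x, HasDerivAt g (g' x) x) (hg' : ∀ x, 0 ≤ g' x)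
    (hbot : Tendsto g atBot (𝓝 m)) (htop : Tendsto g atTop (𝓝 n)) : Integrable g' := by
  have hIoi : IntegrableOn g' (Ioi 0) :=
    integrableOn_Ioi_deriv_of_nonneg' (fun x _ ↦ hderiv x) (fun x _ ↦ hg' x) htop
  have hIic : IntegrableOn g' (Iic 0) := by
    have hreflect : IntegrableOn (g' ∘ Neg.neg) (Ioi 0) :=
      integrableOn_Ioi_deriv_of_nonneg' (g := fun x ↦ -g (-x))
        (fun x _ ↦ by simpa using ((hderiv (-x)).comp x (hasDerivAt_neg x)).fun_neg)
        (fun x _ ↦ hg' (-x)) (hbot.comp tendsto_neg_atTop_atBot).neg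
    rw [← integrableOn_Ici_iff_integrableOn_Ioi, ← neg_zero, ← neg_Iic, ← neg_preimage]
      at hreflect
    exact ((Measure.measurePreserving_neg volume).integrableOn_comp_preimage
      (Homeomorph.neg ℝ).measurableEmbedding).mp hreflect
  simpa using hIic.union hIoi

theorem integral_of_hasDerivAt_of_nonneg_of_tendsto {g g' : ℝ → ℝ} {m n : ℝ}
    (hderiv : ∀ x, HasDerivAt g (g' x) x) (hg' : ∀ x, 0 ≤ g' x)
    (hbot : Tendsto g atBot (𝓝 m)) (htop : Tendsto g atTop (𝓝 n)) : ∫ x, g' x = n - m :=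
  integral_of_hasDerivAt_of_tendsto hderiv
    (integrable_of_hasDerivAt_of_nonneg hderiv hg' hbot htop) hbot htop

namespace Real

theorem hasDerivAt_tanh (x : ℝ) : HasDerivAt tanh (1 / cosh x ^ 2) x := by
  have h := (hasDerivAt_sinh x).div (hasDerivAt_cosh x) (cosh_pos x).ne'
  rw [show sinh / cosh = tanh from funext fun y ↦ (tanh_eq_sinh_div_cosh y).symm] at h
  refine h.congr_deriv ?_
  rw [← cosh_sq_sub_sinh_sq x]
  ring

theorem tanh_eq_one_sub_two_div (x : ℝ) : tanh x = 1 - 2 / (exp (2 * x) + 1) := by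
  have : 0 < exp x := exp_pos x
  rw [tanh_eq_sinh_div_cosh, sinh_eq, cosh_eq, two_mul, exp_add, exp_neg]
  field_simp
  ring

theorem tendsto_tanh_atTop : Tendsto tanh atTop (𝓝 1) := by
  rw [funext tanh_eq_one_sub_two_div]
  simpa using tendsto_const_nhds.sub (tendsto_const_nhds.div_atTop
    (tendsto_atTop_add_const_right _ 1 (tendsto_exp_atTop.comp
      (tendsto_id.const_mul_atTop two_pos))))

theorem tendsto_tanh_atBot : Tendsto tanh atBot (𝓝 (-1)) := by
  simpa [Function.comp_def, tanh_neg] using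
    (tendsto_tanh_atTop.comp tendsto_neg_atBot_atTop).neg

end Real

theorem hasDerivAt_four_mul_arctan_mul_tanh {s c k l : ℝ} (hsc : 0 < 2 * s - c)
    (hl : l ^ 2 * (2 * s - c) = 2 * s + c) (hk : k = l * (2 * s - c)) (x : ℝ) :
    HasDerivAt (fun x ↦ 4 * arctan (l * tanh (k * x / 2)))
      (k ^ 2 / (s * cosh (k * x) - c / 2)) x := by
  have hlin : HasDerivAt (fun x ↦ k * x / 2) (k / 2) x := by
    simpa using ((hasDerivAt_id x).const_mul k).div_const 2
  refine ((((hasDerivAt_tanh _).comp x hlin).const_mul l).arctan.const_mul 4).congr_deriv ?_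
  rw [Function.comp_apply, show k * x = 2 * (k * x / 2) by ring, cosh_two_mul,
    tanh_eq_sinh_div_cosh]
  generalize k * x / 2 = u
  have hch : cosh u ^ 2 = sinh u ^ 2 + 1 := cosh_sq u
  have hch0 : cosh u ≠ 0 := (cosh_pos u).ne'
  have hs : 0 < s := by nlinarith [sq_nonneg l]
  have hden : 2 * s * (cosh u ^ 2 + sinh u ^ 2) - c ≠ 0 := by nlinarith [sq_nonneg (sinh u)]
  field_simp
  rw [hk]
  linear_combination 4 * l ^ 2 * (2 * s - c) * (c * hch - sinh u ^ 2 * hl)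

theorem tendsto_four_mul_arctan_mul_tanh_atTop {k : ℝ} (hk : 0 < k) (l : ℝ) :
    Tendsto (fun x ↦ 4 * arctan (l * tanh (k * x / 2))) atTop (𝓝 (4 * arctan l)) := by
  have := (tendsto_tanh_atTop.comp
    ((tendsto_id.const_mul_atTop hk).atTop_div_const two_pos)).const_mul l
  simpa using ((continuous_arctan.tendsto _).comp this).const_mul 4

theorem tendsto_four_mul_arctan_mul_tanh_atBot {k : ℝ} (hk : 0 < k) (l : ℝ) :
    Tendsto (fun x ↦ 4 * arctan (l * tanh (k * x / 2))) atBot (𝓝 (-(4 * arctan l))) := by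
  have := (tendsto_tanh_atBot.comp
    ((tendsto_id.const_mul_atBot hk).atBot_div_const two_pos)).const_mul l
  simpa [arctan_neg] using ((continuous_arctan.tendsto _).comp this).const_mul 4

theorem sqrt_four_mul_sq_sub_sq {s c : ℝ} (hsc : 0 < 2 * s - c) :
    √(4 * s ^ 2 - c ^ 2) = √((2 * s + c) / (2 * s - c)) * (2 * s - c) := by
  have : 4 * s ^ 2 - c ^ 2 = (2 * s + c) / (2 * s - c) * (2 * s - c) ^ 2 := by
    field_simp
    ring
  rw [this, sqrt_mul' _ (sq_nonneg _), sqrt_sq hsc.le]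

theorem integral_soliton_mass {s c : ℝ} (hc : |c| < 2 * s) :
    ∫ x, (4 * s ^ 2 - c ^ 2) / (s * cosh (√(4 * s ^ 2 - c ^ 2) * x) - c / 2) =
      8 * arctan √((2 * s + c) / (2 * s - c)) := by
  obtain ⟨hneg, hpos⟩ := abs_lt.mp hc
  have hsc : 0 < 2 * s - c := by linarith
  have hk0 : 0 < √(4 * s ^ 2 - c ^ 2) := sqrt_pos.mpr (by nlinarith)
  have hl : √((2 * s + c) / (2 * s - c)) ^ 2 * (2 * s - c) = 2 * s + c := by
    rw [sq_sqrt (div_nonneg (by linarith) hsc.le)]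
    field_simp
  have hderiv := hasDerivAt_four_mul_arctan_mul_tanh hsc hl (sqrt_four_mul_sq_sub_sq hsc)
  nth_rw 1 [← sq_sqrt (show 0 ≤ 4 * s ^ 2 - c ^ 2 by nlinarith)]
  rw [integral_of_hasDerivAt_of_nonneg_of_tendsto hderiv (fun x ↦ ?_)
    (tendsto_four_mul_arctan_mul_tanh_atBot hk0 _) (tendsto_four_mul_arctan_mul_tanh_atTop hk0 _)]
  · ring
  · have := one_le_cosh (√(4 * s ^ 2 - c ^ 2) * x)
    have : 0 < s * cosh (√(4 * s ^ 2 - c ^ 2) * x) - c / 2 := by nlinarith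
    positivity

theorem stmt_14 (ω c : ℝ) (hWC : ω > c ^ 2 / 4) :
    ∫ x : ℝ, (4 * ω - c ^ 2) /
        (Real.sqrt ω * Real.cosh (Real.sqrt (4 * ω - c ^ 2) * x) - c / 2) =
      8 * Real.arctan (Real.sqrt ((2 * Real.sqrt ω + c) / (2 * Real.sqrt ω - c))) := by
  have hω : 0 ≤ ω := by nlinarith [sq_nonneg c]
  have hc : |c| < 2 * √ω :=
    abs_lt_of_sq_lt_sq (by rw [mul_pow, sq_sqrt hω]; linarith) (by positivity)
  simpa only [sq_sqrt hω] using integral_soliton_mass hc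
end

section
/- Define, for κ' ∈ (0, 1) and τ ∈ [0, π/2], the incomplete elliptic integrals E(τ, κ') = ∫₀^τ √(1 − κ'² sin²θ) dθ and F(τ, κ') = ∫₀^τ (1 − κ'² sin²θ)^{−1/2} dθ, and the complete elliptic integral K(κ) = ∫₀^{π/2} (1 − κ² sin²θ)^{−1/2} dθ. Then, as κ' tends to 0 from the right, K(√(1 − κ'²)) · sup_{τ ∈ [0, π/2]} |E(τ, κ') − F(τ, κ')| tends to 0. -/
/-!
With `k := κ'`, the complementary modulus `√(1 - k²)` gives the integrand of `K` the form
`1 / √(cos² θ + k² sin² θ) ≤ 1 / k`, so `K(√(1 - k²)) ≤ π / (2k)`. On the other hand, writing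
`g := 1 - k² sin² θ ∈ [1 - k², 1]`, one has `1/√g - √g = (1 - g)/√g ≤ k² / √(1 - k²)`, so
`|E(τ, k) - F(τ, k)| ≤ (π/2) k² / √(1 - k²)` uniformly in `τ`. The product is therefore at most
`(π/2)² k / √(1 - k²)`, which tends to `0`.
-/

open Real Filter Topology

lemma abs_sqrt_sub_one_div_sqrt_le {a g : ℝ} (ha : 0 < a) (hag : a ≤ g) (hg : g ≤ 1) :
    |√g - 1 / √g| ≤ (1 - a) / √a := by
  have hg0 : 0 < g := ha.trans_le hag
  have hsg : 0 < √g := sqrt_pos.2 hg0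
  have hdiff : 1 / √g - √g = (1 - g) / √g := by
    field_simp
    rw [sq_sqrt hg0.le]
  rw [abs_sub_comm, hdiff, abs_of_nonneg (div_nonneg (sub_nonneg.2 hg) hsg.le)]
  exact div_le_div₀ (by linarith) (by linarith) (sqrt_pos.2 ha) (sqrt_le_sqrt hag)

lemma abs_integral_sqrt_sub_integral_one_div_sqrt_le {k τ : ℝ} (hk : k ^ 2 < 1) (hτ : 0 ≤ τ) :
    |(∫ θ in (0 : ℝ)..τ, √(1 - k ^ 2 * sin θ ^ 2)) -
        ∫ θ in (0 : ℝ)..τ, 1 / √(1 - k ^ 2 * sin θ ^ 2)| ≤ k ^ 2 / √(1 - k ^ 2) * τ := by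
  have hlow : ∀ θ, 1 - k ^ 2 ≤ 1 - k ^ 2 * sin θ ^ 2 := fun θ => by
    nlinarith [sin_sq_le_one θ, sq_nonneg k]
  have hpos : ∀ θ, 0 < √(1 - k ^ 2 * sin θ ^ 2) := fun θ =>
    sqrt_pos.2 ((sub_pos.2 hk).trans_le (hlow θ))
  have hsqrt_cont : Continuous fun θ => √(1 - k ^ 2 * sin θ ^ 2) := by fun_prop
  have hinv_cont : Continuous fun θ => 1 / √(1 - k ^ 2 * sin θ ^ 2) :=
    continuous_const.div hsqrt_cont fun θ => (hpos θ).ne'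
  have hbound : ∀ θ ∈ Set.uIoc (0 : ℝ) τ,
      ‖√(1 - k ^ 2 * sin θ ^ 2) - 1 / √(1 - k ^ 2 * sin θ ^ 2)‖ ≤ k ^ 2 / √(1 - k ^ 2) := by
    intro θ _
    have := abs_sqrt_sub_one_div_sqrt_le (sub_pos.2 hk) (hlow θ) (sub_le_self _ (by positivity))
    rwa [sub_sub_cancel] at this
  rw [← intervalIntegral.integral_sub (hsqrt_cont.intervalIntegrable 0 τ)
    (hinv_cont.intervalIntegrable 0 τ)]
  calc _ ≤ k ^ 2 / √(1 - k ^ 2) * |τ - 0| :=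
        intervalIntegral.norm_integral_le_of_norm_le_const hbound
    _ = _ := by rw [sub_zero, abs_of_nonneg hτ]

lemma integral_one_div_sqrt_complementary_le {k : ℝ} (hk0 : 0 < k) (hk1 : k ≤ 1) :
    ∫ θ in (0 : ℝ)..π / 2, 1 / √(1 - √(1 - k ^ 2) ^ 2 * sin θ ^ 2) ≤ π / 2 / k := by
  have hbound : ∀ θ ∈ Set.uIoc (0 : ℝ) (π / 2),
      ‖1 / √(1 - √(1 - k ^ 2) ^ 2 * sin θ ^ 2)‖ ≤ 1 / k := by
    intro θ _
    have hlow : k ^ 2 ≤ 1 - √(1 - k ^ 2) ^ 2 * sin θ ^ 2 := by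
      rw [sq_sqrt (by nlinarith)]
      nlinarith [sin_sq_le_one θ, mul_nonneg (sub_nonneg.2 hk1) hk0.le]
    rw [norm_of_nonneg (by positivity)]
    gcongr
    exact le_sqrt_of_sq_le hlow
  calc _ ≤ ‖∫ θ in (0 : ℝ)..π / 2, 1 / √(1 - √(1 - k ^ 2) ^ 2 * sin θ ^ 2)‖ := le_norm_self _
    _ ≤ 1 / k * |π / 2 - 0| := intervalIntegral.norm_integral_le_of_norm_le_const hbound
    _ = π / 2 / k := by rw [sub_zero, abs_of_pos (by positivity)]; ring

lemma tendsto_const_mul_div_sqrt_one_sub_sq (c : ℝ) :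
    Tendsto (fun k : ℝ => c * (k / √(1 - k ^ 2))) (𝓝 0) (𝓝 0) := by
  have : ContinuousAt (fun k : ℝ => c * (k / √(1 - k ^ 2))) 0 :=
    continuousAt_const.mul (continuousAt_id.div (by fun_prop) (by simp))
  simpa using this.tendsto

theorem stmt_16 (E F : ℝ → ℝ → ℝ) (K : ℝ → ℝ)
    (hE : ∀ τ κ, E τ κ = ∫ θ in (0 : ℝ)..τ, Real.sqrt (1 - κ ^ 2 * Real.sin θ ^ 2))
    (hF : ∀ τ κ, F τ κ = ∫ θ in (0 : ℝ)..τ, 1 / Real.sqrt (1 - κ ^ 2 * Real.sin θ ^ 2))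
    (hK : ∀ κ, K κ = ∫ θ in (0 : ℝ)..(Real.pi / 2),
      1 / Real.sqrt (1 - κ ^ 2 * Real.sin θ ^ 2)) :
    Tendsto (fun κ' : ℝ =>
        K (Real.sqrt (1 - κ' ^ 2)) *
          ⨆ τ : Set.Icc (0 : ℝ) (Real.pi / 2), |E τ κ' - F τ κ'|)
      (nhdsWithin (0 : ℝ) (Set.Ioi (0 : ℝ))) (nhds 0) := by
  have hsmall : Set.Ioo (0 : ℝ) 1 ∈ 𝓝[>] (0 : ℝ) := Ioo_mem_nhdsGT one_pos
  refine squeeze_zero' ?_ ?_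
    ((tendsto_const_mul_div_sqrt_one_sub_sq ((π / 2) ^ 2)).mono_left nhdsWithin_le_nhds)
  · filter_upwards with k
    refine mul_nonneg ?_ (Real.iSup_nonneg fun _ => abs_nonneg _)
    rw [hK]
    exact intervalIntegral.integral_nonneg (by positivity) fun θ _ => by positivity
  · filter_upwards [hsmall] with k ⟨hk0, hk1⟩
    have hk2 : k ^ 2 < 1 := by nlinarith
    have hKle : K √(1 - k ^ 2) ≤ π / 2 / k := by
      rw [hK]
      exact integral_one_div_sqrt_complementary_le hk0 hk1.le
    have hsup : ⨆ τ : Set.Icc (0 : ℝ) (π / 2), |E τ k - F τ k| ≤ k ^ 2 / √(1 - k ^ 2) * (π / 2) := by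
      refine Real.iSup_le (fun ⟨τ, hτ0, hτ⟩ => ?_) (by positivity)
      rw [hE, hF]
      exact (abs_integral_sqrt_sub_integral_one_div_sqrt_le hk2 hτ0).trans (by gcongr)
    have hsqrt : 0 < √(1 - k ^ 2) := sqrt_pos.2 (by linarith)
    calc _ ≤ π / 2 / k * (k ^ 2 / √(1 - k ^ 2) * (π / 2)) :=
          mul_le_mul hKle hsup (Real.iSup_nonneg fun _ => abs_nonneg _) (by positivity)
      _ = (π / 2) ^ 2 * (k / √(1 - k ^ 2)) := by field_simp
end

section
/- Let (ω, c) ∈ ℝ² satisfy condition (WC) and set α₁ = 4√ω + 2c. Let (Lₙ) be a sequence of positive reals with Lₙ → ∞. Let Φ : ℝ → ℝ be twice continuously differentiable with −Φ''(x) + (ω − c²/4)Φ(x) + (c/2)Φ(x)³ − (3/16)Φ(x)⁵ = 0 for all x ∈ ℝ, with Φ(x)² ≤ α₁ for all x, and with Φ(x) → 0 and Φ'(x) → 0 as |x| → ∞. For each n let Φₙ : ℝ → ℝ be twice continuously differentiable with −Φₙ''(x) + (ω − c²/4)Φₙ(x) + (c/2)Φₙ(x)³ − (3/16)Φₙ(x)⁵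 = 0 and Φₙ(x)² ≤ α₁ for all x ∈ [−Lₙ, Lₙ], and with Φₙ'(Lₙ) = Φₙ'(−Lₙ) = 0. If ∫_{−Lₙ}^{Lₙ} (Φₙ − Φ)² dx → 0 as n → ∞, then also ∫_{−Lₙ}^{Lₙ} (Φₙ'' − Φ'')² dx → 0 and ∫_{−Lₙ}^{Lₙ} (Φₙ' − Φ')² dx → 0 as n → ∞. -/
/-!
The difference `h = Φₙ - Φ` satisfies `h'' = N(Φₙ) - N(Φ)` on `[-Lₙ, Lₙ]`, where
`N(u) = (ω - c²/4) u + (c/2) u³ - (3/16) u⁵`. Both solutions take values in `[-√α₁, √α₁]`,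
where `N` is Lipschitz, so `|h''| ≤ K |h|` and `‖h''‖₂ ≤ K ‖h‖₂`.
Integrating `h'²` by parts gives `‖h'‖₂² = [h h']_{-Lₙ}^{Lₙ} - ∫ h h''`; the boundary term
is controlled by `|Φ'(±Lₙ)| → 0` because `Φₙ'(±Lₙ) = 0`, and `|∫ h h''| ≤ K ‖h‖₂²`.
-/

open Real Filter Set

lemma abs_pow_sub_pow_le_of_abs_le {a b M : ℝ} (n : ℕ) (ha : |a| ≤ M) (hb : |b| ≤ M) :
    |a ^ n - b ^ n| ≤ n * M ^ (n - 1) * |a - b| := by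
  have hM : max |a| |b| ≤ M := max_le ha hb
  calc |a ^ n - b ^ n| ≤ |a - b| * n * max |a| |b| ^ (n - 1) := abs_pow_sub_pow_le a b n
    _ ≤ |a - b| * n * M ^ (n - 1) := by gcongr
    _ = n * M ^ (n - 1) * |a - b| := by ring

lemma abs_cubicQuintic_sub_le (A B C : ℝ) {a b M : ℝ} (ha : |a| ≤ M) (hb : |b| ≤ M) :
    |(A * a + B * a ^ 3 + C * a ^ 5) - (A * b + B * b ^ 3 + C * b ^ 5)| ≤
      (|A| + 3 * |B| * M ^ 2 + 5 * |C| * M ^ 4) * |a - b| := by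
  have h3 : |a ^ 3 - b ^ 3| ≤ 3 * M ^ 2 * |a - b| := by
    simpa using abs_pow_sub_pow_le_of_abs_le 3 ha hb
  have h5 : |a ^ 5 - b ^ 5| ≤ 5 * M ^ 4 * |a - b| := by
    simpa using abs_pow_sub_pow_le_of_abs_le 5 ha hb
  calc |(A * a + B * a ^ 3 + C * a ^ 5) - (A * b + B * b ^ 3 + C * b ^ 5)|
      = |A * (a - b) + B * (a ^ 3 - b ^ 3) + C * (a ^ 5 - b ^ 5)| := by congr 1; ring
    _ ≤ |A| * |a - b| + |B| * |a ^ 3 - b ^ 3| + |C| * |a ^ 5 - b ^ 5| :=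
      (abs_add_three _ _ _).trans_eq (by rw [abs_mul, abs_mul, abs_mul])
    _ ≤ |A| * |a - b| + |B| * (3 * M ^ 2 * |a - b|) + |C| * (5 * M ^ 4 * |a - b|) := by
      gcongr
    _ = (|A| + 3 * |B| * M ^ 2 + 5 * |C| * M ^ 4) * |a - b| := by ring

lemma ContDiff.continuous_deriv_deriv {f : ℝ → ℝ} (hf : ContDiff ℝ 2 f) :
    Continuous (deriv (deriv f)) :=
  ((contDiff_succ_iff_deriv (n := 1)).mp hf).2.2.continuous_deriv_one

lemma deriv_deriv_sub {f g : ℝ → ℝ} (hf : ContDiff ℝ 2 f) (hg : ContDiff ℝ 2 g) :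
    deriv (f - g) = deriv f - deriv g ∧
      deriv (deriv (f - g)) = deriv (deriv f) - deriv (deriv g) := by
  have h1 : deriv (f - g) = deriv f - deriv g := funext fun x =>
    deriv_sub (hf.differentiable two_ne_zero x) (hg.differentiable two_ne_zero x)
  exact ⟨h1, h1 ▸ funext fun x =>
    deriv_sub (hf.differentiable_deriv_two x) (hg.differentiable_deriv_two x)⟩

lemma abs_sub_mul_sub_le_of_eq_zero {a b p q M : ℝ} (ha : |a| ≤ M) (hb : |b| ≤ M)
    (hp : p = 0) :
    |(a - b) * (p - q)| ≤ 2 * M * |q| := by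
  rw [hp, zero_sub, abs_mul, abs_neg]
  gcongr
  linarith [abs_sub a b]

section IntervalIntegral

variable {u w h : ℝ → ℝ} {a b K : ℝ}

lemma integral_sq_le_of_abs_le (hab : a ≤ b) (hu : ContinuousOn u (Icc a b))
    (hw : ContinuousOn w (Icc a b)) (h : ∀ x ∈ Icc a b, |w x| ≤ K * |u x|) :
    ∫ x in a..b, w x ^ 2 ≤ K ^ 2 * ∫ x in a..b, u x ^ 2 := by
  rw [← intervalIntegral.integral_const_mul]
  refine intervalIntegral.integral_mono_on hab ((hw.pow 2).intervalIntegrable_of_Icc hab)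
    ((continuousOn_const.mul (hu.pow 2)).intervalIntegrable_of_Icc hab) fun x hx => ?_
  calc w x ^ 2 = |w x| ^ 2 := (sq_abs _).symm
    _ ≤ (K * |u x|) ^ 2 := pow_le_pow_left₀ (abs_nonneg _) (h x hx) 2
    _ = K ^ 2 * u x ^ 2 := by rw [mul_pow, sq_abs]

lemma abs_integral_mul_le_of_abs_le (hab : a ≤ b) (hu : ContinuousOn u (Icc a b))
    (hw : ContinuousOn w (Icc a b)) (h : ∀ x ∈ Icc a b, |w x| ≤ K * |u x|) :
    |∫ x in a..b, u x * w x| ≤ K * ∫ x in a..b, u x ^ 2 := by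
  rw [← intervalIntegral.integral_const_mul]
  refine (intervalIntegral.abs_integral_le_integral_abs hab).trans <|
    intervalIntegral.integral_mono_on hab ((hu.mul hw).abs.intervalIntegrable_of_Icc hab)
    ((continuousOn_const.mul (hu.pow 2)).intervalIntegrable_of_Icc hab) fun x hx => ?_
  calc |u x * w x| = |u x| * |w x| := abs_mul _ _
    _ ≤ |u x| * (K * |u x|) := mul_le_mul_of_nonneg_left (h x hx) (abs_nonneg _)
    _ = K * u x ^ 2 := by rw [← sq_abs (u x)]; ring

lemma integral_deriv_sq_eq (hh : ContDiff ℝ 2 h) :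
    ∫ x in a..b, deriv h x ^ 2 =
      h b * deriv h b - h a * deriv h a - ∫ x in a..b, h x * deriv (deriv h) x := by
  have hparts := intervalIntegral.integral_mul_deriv_eq_deriv_mul
    (fun x _ => (hh.differentiable two_ne_zero x).hasDerivAt)
    (fun x _ => (hh.differentiable_deriv_two x).hasDerivAt)
    ((hh.continuous_deriv one_le_two).intervalIntegrable a b)
    (hh.continuous_deriv_deriv.intervalIntegrable a b)
  simp only [sq]
  linarith

lemma integral_deriv_sq_le (hab : a ≤ b) (hh : ContDiff ℝ 2 h)
    (hK : ∀ x ∈ Icc a b, |deriv (deriv h) x| ≤ K * |h x|) :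
    ∫ x in a..b, deriv h x ^ 2 ≤
      |h b * deriv h b| + |h a * deriv h a| + K * ∫ x in a..b, h x ^ 2 := by
  have hmul := abs_integral_mul_le_of_abs_le hab hh.continuous.continuousOn
    hh.continuous_deriv_deriv.continuousOn hK
  rw [integral_deriv_sq_eq hh]
  linarith [le_abs_self (h b * deriv h b), neg_abs_le (h a * deriv h a),
    neg_abs_le (∫ x in a..b, h x * deriv (deriv h) x)]

end IntervalIntegral

theorem stmt_17_general (ω c : ℝ) (α₁ : ℝ)
    (L : ℕ → ℝ) (hL : Tendsto L atTop atTop)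
    (Φ : ℝ → ℝ) (hΦreg : ContDiff ℝ 2 Φ)
    (hΦeq : ∀ x : ℝ, -deriv (deriv Φ) x + (ω - c ^ 2 / 4) * Φ x +
      c / 2 * Φ x ^ 3 - 3 / 16 * Φ x ^ 5 = 0)
    (hΦbd : ∀ x : ℝ, Φ x ^ 2 ≤ α₁)
    (hΦ'0top : Tendsto (deriv Φ) atTop (nhds 0))
    (hΦ'0bot : Tendsto (deriv Φ) atBot (nhds 0))
    (Φn : ℕ → ℝ → ℝ) (hΦnreg : ∀ n, ContDiff ℝ 2 (Φn n))
    (hΦneq : ∀ n, ∀ x ∈ Set.Icc (-(L n)) (L n),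
      -deriv (deriv (Φn n)) x + (ω - c ^ 2 / 4) * Φn n x +
        c / 2 * Φn n x ^ 3 - 3 / 16 * Φn n x ^ 5 = 0)
    (hΦnbd : ∀ n, ∀ x ∈ Set.Icc (-(L n)) (L n), Φn n x ^ 2 ≤ α₁)
    (hΦn' : ∀ n, deriv (Φn n) (L n) = 0 ∧ deriv (Φn n) (-(L n)) = 0)
    (hL2 : Tendsto (fun n => ∫ x in (-(L n))..(L n), (Φn n x - Φ x) ^ 2)
      atTop (nhds 0)) :
    Tendsto (fun n => ∫ x in (-(L n))..(L n),
        (deriv (deriv (Φn n)) x - deriv (deriv Φ) x) ^ 2) atTop (nhds 0) ∧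
    Tendsto (fun n => ∫ x in (-(L n))..(L n),
        (deriv (Φn n) x - deriv Φ x) ^ 2) atTop (nhds 0) := by
  set M := √α₁
  set K := |ω - c ^ 2 / 4| + 3 * |c / 2| * M ^ 2 + 5 * |-(3 / 16 : ℝ)| * M ^ 4
  have hab : ∀ᶠ n in atTop, -(L n) ≤ L n :=
    (hL.eventually_ge_atTop 0).mono fun _ => neg_le_self
  have hlip : ∀ n, ∀ x ∈ Icc (-(L n)) (L n),
      |deriv (deriv (Φn n)) x - deriv (deriv Φ) x| ≤ K * |Φn n x - Φ x| := fun n x hx => by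
    convert abs_cubicQuintic_sub_le (ω - c ^ 2 / 4) (c / 2) (-(3 / 16))
      (abs_le_sqrt (hΦnbd n x hx)) (abs_le_sqrt (hΦbd x)) using 2
    linarith [hΦneq n x hx, hΦeq x]
  constructor
  · refine squeeze_zero' (hab.mono fun n hn => intervalIntegral.integral_nonneg hn fun _ _ =>
      sq_nonneg _) (hab.mono fun n hn => ?_) (by simpa using hL2.const_mul (K ^ 2))
    exact integral_sq_le_of_abs_le hn ((hΦnreg n).continuous.sub hΦreg.continuous).continuousOn
      ((hΦnreg n).continuous_deriv_deriv.sub hΦreg.continuous_deriv_deriv).continuousOn (hlip n)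
  · refine squeeze_zero' (hab.mono fun n hn => intervalIntegral.integral_nonneg hn fun _ _ =>
      sq_nonneg _) (hab.mono fun n hn => ?_)
      (((((hΦ'0top.comp hL).abs.const_mul (2 * M)).add
        ((hΦ'0bot.comp (tendsto_neg_atBot_iff.mpr hL)).abs.const_mul (2 * M))).add
        (hL2.const_mul K)).trans (by simp))
    obtain ⟨hd, hdd⟩ := deriv_deriv_sub (hΦnreg n) hΦreg
    have hbound := integral_deriv_sq_le (h := Φn n - Φ) hn ((hΦnreg n).sub hΦreg)
      fun x hx => by rw [hdd]; exact hlip n x hx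
    simp only [hd, Pi.sub_apply] at hbound
    have hright := abs_sub_mul_sub_le_of_eq_zero (q := deriv Φ (L n))
      (abs_le_sqrt (hΦnbd n (L n) ⟨hn, le_rfl⟩)) (abs_le_sqrt (hΦbd (L n))) (hΦn' n).1
    have hleft := abs_sub_mul_sub_le_of_eq_zero (q := deriv Φ (-(L n)))
      (abs_le_sqrt (hΦnbd n (-(L n)) ⟨le_rfl, hn⟩)) (abs_le_sqrt (hΦbd (-(L n)))) (hΦn' n).2
    simp only [Function.comp_apply]
    linarith

theorem stmt_17 (ω c : ℝ) (hWC : ω > c ^ 2 / 4 ∨ (ω = c ^ 2 / 4 ∧ c > 0))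
    (α₁ : ℝ) (hα₁ : α₁ = 4 * Real.sqrt ω + 2 * c)
    (L : ℕ → ℝ) (hLpos : ∀ n, 0 < L n) (hL : Tendsto L atTop atTop)
    (Φ : ℝ → ℝ) (hΦreg : ContDiff ℝ 2 Φ)
    (hΦeq : ∀ x : ℝ, -deriv (deriv Φ) x + (ω - c ^ 2 / 4) * Φ x +
      c / 2 * Φ x ^ 3 - 3 / 16 * Φ x ^ 5 = 0)
    (hΦbd : ∀ x : ℝ, Φ x ^ 2 ≤ α₁)
    (hΦ0top : Tendsto Φ atTop (nhds 0)) (hΦ0bot : Tendsto Φ atBot (nhds 0))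
    (hΦ'0top : Tendsto (deriv Φ) atTop (nhds 0))
    (hΦ'0bot : Tendsto (deriv Φ) atBot (nhds 0))
    (Φn : ℕ → ℝ → ℝ) (hΦnreg : ∀ n, ContDiff ℝ 2 (Φn n))
    (hΦneq : ∀ n, ∀ x ∈ Set.Icc (-(L n)) (L n),
      -deriv (deriv (Φn n)) x + (ω - c ^ 2 / 4) * Φn n x +
        c / 2 * Φn n x ^ 3 - 3 / 16 * Φn n x ^ 5 = 0)
    (hΦnbd : ∀ n, ∀ x ∈ Set.Icc (-(L n)) (L n), Φn n x ^ 2 ≤ α₁)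
    (hΦn' : ∀ n, deriv (Φn n) (L n) = 0 ∧ deriv (Φn n) (-(L n)) = 0)
    (hL2 : Tendsto (fun n => ∫ x in (-(L n))..(L n), (Φn n x - Φ x) ^ 2)
      atTop (nhds 0)) :
    Tendsto (fun n => ∫ x in (-(L n))..(L n),
        (deriv (deriv (Φn n)) x - deriv (deriv Φ) x) ^ 2) atTop (nhds 0) ∧
    Tendsto (fun n => ∫ x in (-(L n))..(L n),
        (deriv (Φn n) x - deriv Φ x) ^ 2) atTop (nhds 0) :=
  stmt_17_general ω c α₁ L hL Φ hΦreg hΦeq hΦbd hΦ'0top hΦ'0bot Φn hΦnreg hΦneq hΦnbd hΦn' hL2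
end
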